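/- arXiv:2202.08565 — 2 statements merged into one kernel-verified Lean document; each statement's English description precedes it below -/
import Mathlib

section
/- Let h: ℕ → ℕ be the Hilbert function of some reduced projective variety in P^N, where N = C(n+d,d) − 1. Then there exists a reduced closed subvariety X ⊆ V_{n,d} ⊆ P^N with H_X(t) = h(t) for all t if and only if there exists a function k: ℕ → ℕ which is the Hilbert function of some reduced projective variety in P^n and such that h(t) = k(dt) for all t. -/
open MvPolynomial

noncomputable section

namespace VeroneseCI

variable (K : Type) [Field K]

/-- Evaluation of the monomial with exponent vector `m` at the point `v` of the affine cone. -/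
def monEval {n : ℕ} (v : Fin (n + 1) → K) (m : Fin (n + 1) →₀ ℕ) : K :=
  m.prod fun j k => v j ^ k

/-- The Veronese coordinates of a vector `v`, indexed by `ι` via the enumeration `e` of the
degree-`d` exponent vectors. -/
def vCoords (n d : ℕ) {ι : Type} (e : ι ≃ {m : Fin (n + 1) →₀ ℕ // m.degree = d})
    (v : Fin (n + 1) → K) : ι → K :=
  fun i => monEval K v (e i).1

/-- The Veronese embedding `ν_{n,d} : ℙⁿ → ℙᴺ` (with the coordinates of the target indexed by
`ι` via the enumeration `e` of the degree-`d` monomials). -/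
def veroneseMap (n d : ℕ) {ι : Type} [Nonempty ι]
    (e : ι ≃ {m : Fin (n + 1) →₀ ℕ // m.degree = d})
    (x : Projectivization K (Fin (n + 1) → K)) : Projectivization K (ι → K) :=
  letI := Classical.propDecidable (vCoords K n d e x.rep ≠ 0)
  if h : vCoords K n d e x.rep ≠ 0 then Projectivization.mk K (vCoords K n d e x.rep) h
  else Projectivization.mk K (fun _ => 1)
    (fun hc => one_ne_zero (congrFun hc (Classical.arbitrary ι)))

/-- The Veronese variety `V_{n,d}`, i.e. the image of the Veronese embedding. -/
def veroneseVariety (n d : ℕ) {ι : Type} [Nonempty ι]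
    (e : ι ≃ {m : Fin (n + 1) →₀ ℕ // m.degree = d}) : Set (Projectivization K (ι → K)) :=
  Set.range (veroneseMap K n d e)

/-- The graded `K`-algebra morphism `φ_d : S → R` sending `y_i` to the `i`-th degree-`d`
monomial. -/
def phi (n d : ℕ) {ι : Type} (e : ι ≃ {m : Fin (n + 1) →₀ ℕ // m.degree = d}) :
    MvPolynomial ι K →ₐ[K] MvPolynomial (Fin (n + 1)) K :=
  MvPolynomial.aeval fun i => MvPolynomial.monomial (e i).1 (1 : K)

variable {σ : Type}

/-- The homogeneous vanishing ideal of a set of points of projective space. -/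
def pvi (W : Set (Projectivization K (σ → K))) : Ideal (MvPolynomial σ K) :=
  ⨅ (v : {w : σ → K // w ≠ 0}) (_ : Projectivization.mk K v.1 v.2 ∈ W),
    RingHom.ker (MvPolynomial.eval v.1)

/-- The zero locus in projective space of an ideal of the polynomial ring. -/
def pzl (I : Ideal (MvPolynomial σ K)) : Set (Projectivization K (σ → K)) :=
  {x | ∀ f ∈ I, ∀ v : {w : σ → K // w ≠ 0}, Projectivization.mk K v.1 v.2 = x →
    MvPolynomial.eval v.1 f = 0}

/-- A set of points of projective space is a (reduced) closed subvariety if it is the zero locus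
of its homogeneous vanishing ideal. -/
def IsClosedSubvariety (W : Set (Projectivization K (σ → K))) : Prop :=
  W = pzl K (pvi K W)

/-- The Hilbert function of a subset `W` of projective space: the `K`-dimension of the degree-`t`
part of the homogeneous coordinate ring of `W`. -/
def hilb (W : Set (Projectivization K (σ → K))) (t : ℕ) : ℕ :=
  Module.finrank K ((homogeneousSubmodule σ K t) ⧸
    ((Submodule.restrictScalars K (pvi K W)).comap (homogeneousSubmodule σ K t).subtype))

/-- `W` is a complete intersection of type `(a 0, …, a (r-1))` if it is a closed subvariety whose
homogeneous vanishing ideal is generated by homogeneous forms of degrees `a 0, …, a (r-1)` and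
whose codimension is `r`. -/
def IsCIofType [Fintype σ] (W : Set (Projectivization K (σ → K))) {r : ℕ} (a : Fin r → ℕ) :
    Prop :=
  IsClosedSubvariety K W ∧
  (∃ f : Fin r → MvPolynomial σ K, (∀ i, (f i).IsHomogeneous (a i)) ∧
      pvi K W = Ideal.span (Set.range f)) ∧
  ringKrullDim (MvPolynomial σ K ⧸ pvi K W) + (r : WithBot ℕ∞) =
    (Fintype.card σ : WithBot ℕ∞)

/-- A conic: a complete intersection of type `(1,…,1,2)` of codimension `card σ - 2`
(i.e. a plane curve of degree `2`). -/
def IsConic [Fintype σ] (C : Set (Projectivization K (σ → K))) : Prop :=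
  IsCIofType K C (fun i : Fin (Fintype.card σ - 2) =>
    if (i : ℕ) < Fintype.card σ - 3 then 1 else 2)

/-- `macaulayBound t c = c^⟨t⟩`, computed greedily from the `t`-binomial expansion of `c`. -/
def macaulayBound : ℕ → ℕ → ℕ
  | 0, _ => 0
  | _ + 1, 0 => 0
  | t + 1, c + 1 =>
    let m := Nat.findGreatest (fun m => Nat.choose m (t + 1) ≤ c + 1) (c + t + 2)
    Nat.choose (m + 1) (t + 2) + macaulayBound t (c + 1 - Nat.choose m (t + 1))

/-- A 0-sequence: `c 0 = 1` and `c (t+1) ≤ (c t)^⟨t⟩` for all `t ≥ 1`. -/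
def IsZeroSequence (c : ℕ → ℕ) : Prop :=
  c 0 = 1 ∧ ∀ t : ℕ, 1 ≤ t → c (t + 1) ≤ macaulayBound t (c t)

/-- The first difference sequence of `b` (with `b (-1) = 0`). -/
def deltaSeq (b : ℕ → ℕ) : ℕ → ℕ
  | 0 => b 0
  | t + 1 => b (t + 1) - b t

/-- A differentiable 0-sequence: a 0-sequence whose first difference sequence is again a
0-sequence. -/
def IsDiffZeroSequence (b : ℕ → ℕ) : Prop :=
  IsZeroSequence b ∧ Monotone b ∧ IsZeroSequence (deltaSeq b)

/-- An `e`-sequence: a 0-sequence `b` for which there is a 0-sequence `c` with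
`b t = c ((e+1) * t)`. -/
def IsESequence (e : ℕ) (b : ℕ → ℕ) : Prop :=
  IsZeroSequence b ∧ ∃ c : ℕ → ℕ, IsZeroSequence c ∧ ∀ t, b t = c ((e + 1) * t)

/-- A differentiable `e`-sequence: a 0-sequence `b` for which there is a differentiable
0-sequence `c` with `b t = c ((e+1) * t)`. -/
def IsDiffESequence (e : ℕ) (b : ℕ → ℕ) : Prop :=
  IsZeroSequence b ∧ ∃ c : ℕ → ℕ, IsDiffZeroSequence c ∧ ∀ t, b t = c ((e + 1) * t)

/-- The function `μ₂(d,t,s)` of the paper. -/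
def mu2 (d t s : ℕ) : ℕ :=
  let m1 := d ^ 2 * t + d * (d + 3) / 2 - s
  if m1 ≤ (d + 1).choose 2 then
    (⌊((2 * d * (t + 1) + 3 : ℝ) - Real.sqrt (1 + 8 * m1)) / 2⌋).toNat
  else
    d * t - (m1 - (d + 1).choose 2 - 1) / d

/-- A (commutative, Noetherian) ring is Gorenstein if it has finite injective dimension as a
module over itself, i.e. there is `n` such that `Ext^i (M, A) = 0` for all modules `M` and all
`i > n`. -/
def IsGorensteinRing (A : Type) [CommRing A] : Prop :=
  IsNoetherianRing A ∧ ∃ n : ℕ, ∀ (M : ModuleCat.{0} A) (i : ℕ), n < i →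
    CategoryTheory.Limits.IsZero (((Ext A (ModuleCat.{0} A) i).obj (Opposite.op M)).obj
      (ModuleCat.of A A))

/-!
The ring map `φ_d : y_m ↦ x^m` identifies the homogeneous coordinate ring of `ν(W)` with the
Veronese subring `⊕ₜ (K[x]/I(W))_{dt}`: `I(ν(W))` is the preimage of `I(W)` under `φ_d`, and `φ_d`
maps the forms of degree `t` onto the forms of degree `d t`. Hence `H_{ν(W)}(t) = H_W(d t)`, and it
remains to see that `ν` and `ν⁻¹` preserve closed subvarieties. The hard direction is that `ν(W)`
is closed: a point in the zero set of `I(ν(W)) ⊇ ker φ_d` satisfies the binomial relations among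
the Veronese coordinates, hence is `ν(v)` for some `v`; and `v ∈ W` because for a homogeneous
`g ∈ I(W)` the power `g ^ d` is `φ_d q` with `q ∈ I(ν(W))`.
-/

lemma mem_pvi {W : Set (Projectivization K (σ → K))} {f : MvPolynomial σ K} :
    f ∈ pvi K W ↔ ∀ (v : σ → K) (hv : v ≠ 0), Projectivization.mk K v hv ∈ W → eval v f = 0 := by
  simp only [pvi, Ideal.mem_iInf, RingHom.mem_ker]
  exact ⟨fun h v hv hm => h ⟨v, hv⟩ hm, fun h v hm => h v.1 v.2 hm⟩

lemma mem_pzl {I : Ideal (MvPolynomial σ K)} {x : Projectivization K (σ → K)} :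
    x ∈ pzl K I ↔ ∀ f ∈ I, ∀ (v : σ → K) (hv : v ≠ 0),
      Projectivization.mk K v hv = x → eval v f = 0 :=
  ⟨fun h f hf v hv hm => h f hf ⟨v, hv⟩ hm, fun h f hf v hm => h f hf v.1 v.2 hm⟩

lemma subset_pzl_pvi (W : Set (Projectivization K (σ → K))) : W ⊆ pzl K (pvi K W) :=
  fun _ hx => mem_pzl K |>.mpr fun _ hf v hv hmk => mem_pvi K |>.mp hf v hv (hmk ▸ hx)

lemma isClosedSubvariety_iff {W : Set (Projectivization K (σ → K))} :
    IsClosedSubvariety K W ↔ pzl K (pvi K W) ⊆ W :=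
  ⟨fun h => h.symm.subset, fun h => (subset_pzl_pvi K W).antisymm h⟩

lemma eval_smul_of_isHomogeneous {p : MvPolynomial σ K} {s : ℕ} (hp : p.IsHomogeneous s)
    (c : K) (u : σ → K) : eval (c • u) p = c ^ s * eval u p := by
  rw [eval_eq, eval_eq, Finset.mul_sum]
  refine Finset.sum_congr rfl fun m hm => ?_
  have hdeg : m.degree = s :=
    (Finsupp.degree_apply m).trans (hp.degree_eq_sum_deg_support hm).symm
  simp only [Pi.smul_apply, smul_eq_mul, mul_pow, Finset.prod_mul_distrib,
    Finset.prod_pow_eq_pow_sum, ← Finsupp.degree_apply, hdeg]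
  ring

lemma eval_smul_eq_sum_homogeneousComponent (c : K) (u : σ → K) (g : MvPolynomial σ K) :
    eval (c • u) g = ∑ s ∈ Finset.range (g.totalDegree + 1),
      c ^ s * eval u (homogeneousComponent s g) := by
  conv_lhs => rw [← sum_homogeneousComponent g, map_sum]
  exact Finset.sum_congr rfl fun s _ =>
    eval_smul_of_isHomogeneous K (homogeneousComponent_isHomogeneous s g) c u

lemma eval_homogeneousComponent_eq_zero [Infinite K] {u : σ → K} {g : MvPolynomial σ K}
    (H : ∀ c : K, c ≠ 0 → eval (c • u) g = 0) (s : ℕ) :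
    eval u (homogeneousComponent s g) = 0 := by
  set P : Polynomial K := ∑ i ∈ Finset.range (g.totalDegree + 1),
    Polynomial.monomial i (eval u (homogeneousComponent i g))
  have hP : P = 0 := by
    refine Polynomial.eq_zero_of_infinite_isRoot P <|
      (Set.finite_singleton (0 : K)).infinite_compl.mono fun c hc => ?_
    simpa [P, Polynomial.eval_finsetSum, eval_smul_eq_sum_homogeneousComponent, mul_comm]
      using H c hc
  by_cases hs : s < g.totalDegree + 1
  · simpa [P, Polynomial.finsetSum_coeff, Polynomial.coeff_monomial, hs]
      using congrArg (Polynomial.coeff · s) hP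
  · rw [homogeneousComponent_eq_zero s g (by omega), map_zero]

lemma mk_smul_eq_mk {v : σ → K} (hv : v ≠ 0) {c : K} (hc : c ≠ 0) :
    Projectivization.mk K (c • v) (smul_ne_zero hc hv) = Projectivization.mk K v hv :=
  (Projectivization.mk_eq_mk_iff' K _ _ _ _).mpr ⟨c, rfl⟩

lemma homogeneousComponent_mem_pvi [Infinite K] {W : Set (Projectivization K (σ → K))}
    {g : MvPolynomial σ K} (hg : g ∈ pvi K W) (s : ℕ) : homogeneousComponent s g ∈ pvi K W :=
  mem_pvi K |>.mpr fun v hv hvW => eval_homogeneousComponent_eq_zero K (fun c hc =>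
    mem_pvi K |>.mp hg (c • v) (smul_ne_zero hc hv) ((mk_smul_eq_mk K hv hc).symm ▸ hvW)) s

lemma mk_mem_pzl_pvi_of_isHomogeneous [Infinite K] {W : Set (Projectivization K (σ → K))}
    {v : σ → K} (hv : v ≠ 0) (H : ∀ g ∈ pvi K W, ∀ s, g.IsHomogeneous s → eval v g = 0) :
    Projectivization.mk K v hv ∈ pzl K (pvi K W) := by
  refine mem_pzl K |>.mpr fun g hg v' hv' hmk => ?_
  obtain ⟨c, rfl⟩ := (Projectivization.mk_eq_mk_iff' K _ _ hv' hv).mp hmk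
  rw [eval_smul_eq_sum_homogeneousComponent]
  exact Finset.sum_eq_zero fun s _ => by
    rw [H _ (homogeneousComponent_mem_pvi K hg s) s (homogeneousComponent_isHomogeneous s g),
      mul_zero]

section VeroneseCoordinates

variable {n d : ℕ} {ι : Type} (e : ι ≃ {m : Fin (n + 1) →₀ ℕ // m.degree = d})

lemma monEval_eq_prod (v : Fin (n + 1) → K) (m : Fin (n + 1) →₀ ℕ) :
    monEval K v m = ∏ j, v j ^ m j :=
  Finsupp.prod_fintype _ _ fun _ => pow_zero _

lemma vCoords_apply (v : Fin (n + 1) → K) (i : ι) :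
    vCoords K n d e v i = ∏ j, v j ^ (e i).1 j :=
  monEval_eq_prod K v _

lemma vCoords_smul (c : K) (v : Fin (n + 1) → K) :
    vCoords K n d e (c • v) = c ^ d • vCoords K n d e v := by
  funext i
  simp only [vCoords_apply, Pi.smul_apply, smul_eq_mul, mul_pow, Finset.prod_mul_distrib,
    Finset.prod_pow_eq_pow_sum, ← Finsupp.degree_eq_sum, (e i).2]

lemma vCoords_zero (hd : 0 < d) : vCoords K n d e 0 = 0 := by
  simpa [zero_pow hd.ne'] using vCoords_smul K e 0 0

lemma vCoords_ne_zero {v : Fin (n + 1) → K} (hv : v ≠ 0) : vCoords K n d e v ≠ 0 := by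
  obtain ⟨j, hj⟩ := Function.ne_iff.mp hv
  intro h0
  have := congrFun h0 (e.symm ⟨Finsupp.single j d, Finsupp.degree_single j d⟩)
  simp only [vCoords, monEval, Equiv.apply_symm_apply, Finsupp.prod_single_index, pow_zero] at this
  exact hj (eq_zero_of_pow_eq_zero this)

lemma veroneseMap_mk [Nonempty ι] (v : Fin (n + 1) → K) (hv : v ≠ 0) :
    veroneseMap K n d e (Projectivization.mk K v hv) =
      Projectivization.mk K (vCoords K n d e v) (vCoords_ne_zero K e hv) := by
  obtain ⟨a, ha⟩ := (Projectivization.mk_eq_mk_iff' K _ v (Projectivization.rep_nonzero _) hv).mp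
    (Projectivization.mk_rep (Projectivization.mk K v hv))
  rw [veroneseMap, dif_pos (vCoords_ne_zero K e (Projectivization.rep_nonzero _)),
    Projectivization.mk_eq_mk_iff']
  exact ⟨a ^ d, by rw [← ha, vCoords_smul]⟩

lemma phi_X (i : ι) : phi K n d e (X i) = monomial (e i).1 1 :=
  aeval_X _ i

lemma eval_phi (v : Fin (n + 1) → K) (f : MvPolynomial ι K) :
    eval v (phi K n d e f) = eval (vCoords K n d e v) f := by
  rw [phi, aeval_eq_bind₁, eval, eval₂Hom_bind₁]
  congr
  funext i
  simp [vCoords, monEval]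

end VeroneseCoordinates

section VeroneseImage

variable [IsAlgClosed K] {n d : ℕ} {ι : Type} [Nonempty ι]
  (e : ι ≃ {m : Fin (n + 1) →₀ ℕ // m.degree = d})

/-- Rescaling by `c` multiplies `vCoords` by `c ^ d`, and every scalar is a `d`-th power. -/
lemma exists_rep_vCoords_eq (hd : 0 < d) {v : Fin (n + 1) → K} (hv : v ≠ 0)
    {w : ι → K} (hw : w ≠ 0)
    (h : Projectivization.mk K w hw = veroneseMap K n d e (Projectivization.mk K v hv)) :
    ∃ (u : Fin (n + 1) → K) (hu : u ≠ 0),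
      Projectivization.mk K u hu = Projectivization.mk K v hv ∧ vCoords K n d e u = w := by
  rw [veroneseMap_mk, Projectivization.mk_eq_mk_iff] at h
  obtain ⟨a, ha⟩ := h
  obtain ⟨r, hr⟩ := IsAlgClosed.exists_pow_nat_eq (a : K) hd
  have hr0 : r ≠ 0 := by rintro rfl; exact a.ne_zero (by rw [← hr, zero_pow hd.ne'])
  exact ⟨r • v, smul_ne_zero hr0 hv, mk_smul_eq_mk K hv hr0,
    by rw [vCoords_smul, hr, ← ha, Units.smul_def]⟩

lemma mk_mem_image_veroneseMap_iff (hd : 0 < d) {W : Set (Projectivization K (Fin (n + 1) → K))}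
    {w : ι → K} (hw : w ≠ 0) :
    Projectivization.mk K w hw ∈ veroneseMap K n d e '' W ↔
      ∃ (v : Fin (n + 1) → K) (hv : v ≠ 0),
        Projectivization.mk K v hv ∈ W ∧ vCoords K n d e v = w := by
  constructor
  · rintro ⟨x, hxW, hx⟩
    rw [← Projectivization.mk_rep x] at hxW hx
    obtain ⟨u, hu, humk, rfl⟩ := exists_rep_vCoords_eq K e hd _ hw hx.symm
    exact ⟨u, hu, humk ▸ hxW, rfl⟩
  · rintro ⟨v, hv, hvW, rfl⟩
    exact ⟨_, hvW, veroneseMap_mk K e v hv⟩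

lemma pvi_image_veroneseMap (hd : 0 < d) (W : Set (Projectivization K (Fin (n + 1) → K))) :
    pvi K (veroneseMap K n d e '' W) = (pvi K W).comap (phi K n d e) := by
  ext f
  simp only [Ideal.mem_comap, mem_pvi, eval_phi]
  constructor
  · exact fun H v hv hvW =>
      H _ (vCoords_ne_zero K e hv) ((mk_mem_image_veroneseMap_iff K e hd _).mpr ⟨v, hv, hvW, rfl⟩)
  · intro H w hw hwW
    obtain ⟨v, hv, hvW, rfl⟩ := (mk_mem_image_veroneseMap_iff K e hd hw).mp hwW
    exact H v hv hvW

end VeroneseImage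

section Homogeneous

variable {n d : ℕ} {ι : Type} (e : ι ≃ {m : Fin (n + 1) →₀ ℕ // m.degree = d})

lemma map_phi_homogeneousSubmodule_one :
    (homogeneousSubmodule ι K 1).map (phi K n d e).toLinearMap =
      homogeneousSubmodule (Fin (n + 1)) K d := by
  rw [homogeneousSubmodule_one_eq_span_X, Submodule.map_span,
    homogeneousSubmodule_eq_finsupp_supported, AddMonoidAlgebra.supported_eq_span_single,
    ← Set.range_comp]
  congr 1
  ext p
  simp only [Set.mem_range, Function.comp_apply, AlgHom.toLinearMap_apply, phi_X, Set.mem_image,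
    Set.mem_ofPred_eq]
  constructor
  · rintro ⟨i, rfl⟩
    exact ⟨_, (e i).2, rfl⟩
  · rintro ⟨m, hm, rfl⟩
    exact ⟨e.symm ⟨m, hm⟩, by rw [Equiv.apply_symm_apply]; rfl⟩

/-- Both sides are `t`-th powers: of the space of linear forms, and of the space of forms of
degree `d`. -/
lemma map_phi_homogeneousSubmodule (t : ℕ) :
    (homogeneousSubmodule ι K t).map (phi K n d e).toLinearMap =
      homogeneousSubmodule (Fin (n + 1)) K (d * t) := by
  rw [← homogeneousSubmodule_one_pow (σ := ι) (R := K) t, Submodule.map_pow,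
    map_phi_homogeneousSubmodule_one, ← homogeneousSubmodule_one_pow (σ := Fin (n + 1)) (R := K) d,
    ← pow_mul, homogeneousSubmodule_one_pow]

end Homogeneous

lemma finrank_quotient_comap_comap {R M N : Type*} [Ring R] [AddCommGroup M] [Module R M]
    [AddCommGroup N] [Module R N] (f : M →ₗ[R] N) (S : Submodule R M) (J : Submodule R N) :
    Module.finrank R (S ⧸ (J.comap f).comap S.subtype) =
      Module.finrank R (S.map f ⧸ J.comap (S.map f).subtype) := by
  set g := (J.comap (S.map f).subtype).mkQ ∘ₗ f.submoduleMap S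
  have hg : Function.Surjective g :=
    (Submodule.mkQ_surjective _).comp (f.submoduleMap_surjective S)
  have hker : LinearMap.ker g = (J.comap f).comap S.subtype := by
    ext x
    simp [g, Submodule.Quotient.mk_eq_zero]
  exact ((Submodule.quotEquivOfEq _ _ hker.symm).trans (g.quotKerEquivOfSurjective hg)).finrank_eq

lemma hilb_image_veroneseMap [IsAlgClosed K] {n d : ℕ} {ι : Type} [Nonempty ι]
    (e : ι ≃ {m : Fin (n + 1) →₀ ℕ // m.degree = d}) (hd : 0 < d)
    (W : Set (Projectivization K (Fin (n + 1) → K))) (t : ℕ) :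
    hilb K (veroneseMap K n d e '' W) t = hilb K W (d * t) := by
  have := finrank_quotient_comap_comap (phi K n d e).toLinearMap (homogeneousSubmodule ι K t)
    ((pvi K W).restrictScalars K)
  rw [map_phi_homogeneousSubmodule] at this
  rw [hilb, hilb, pvi_image_veroneseMap K e hd]
  exact this

section VeroneseRelations

variable {n d : ℕ} {ι : Type} (e : ι ≃ {m : Fin (n + 1) →₀ ℕ // m.degree = d})

def powIdx (j : Fin (n + 1)) : ι :=
  e.symm ⟨Finsupp.single j d, Finsupp.degree_single j d⟩

def mixedIdx (hd : 0 < d) (k j : Fin (n + 1)) : ι :=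
  e.symm ⟨Finsupp.single k (d - 1) + Finsupp.single j 1, by
    rw [map_add, Finsupp.degree_single, Finsupp.degree_single, Nat.sub_add_cancel hd]⟩

lemma monomial_one_eq_prod (m : Fin (n + 1) →₀ ℕ) :
    monomial m (1 : K) = ∏ j, X j ^ m j := by
  rw [monomial_eq, C_1, one_mul, Finsupp.prod_fintype _ _ fun _ => pow_zero _]

lemma phi_X_powIdx (j : Fin (n + 1)) : phi K n d e (X (powIdx e j)) = X j ^ d := by
  rw [phi_X, powIdx, Equiv.apply_symm_apply, X_pow_eq_monomial]

lemma phi_X_mixedIdx (hd : 0 < d) (k j : Fin (n + 1)) :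
    phi K n d e (X (mixedIdx e hd k j)) = X k ^ (d - 1) * X j := by
  rw [phi_X, mixedIdx, Equiv.apply_symm_apply, monomial_add_single, ← X_pow_eq_monomial,
    pow_one]

variable {e} {w : ι → K}

lemma eval_eq_of_phi_eq (H : ∀ p ∈ RingHom.ker (phi K n d e), eval w p = 0)
    {p q : MvPolynomial ι K} (hpq : phi K n d e p = phi K n d e q) : eval w p = eval w q := by
  rw [← sub_eq_zero, ← map_sub]
  exact H _ (by rw [RingHom.mem_ker, map_sub, hpq, sub_self])

lemma exists_eval_powIdx_ne_zero (H : ∀ p ∈ RingHom.ker (phi K n d e), eval w p = 0) (hd : 0 < d)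
    (hw : w ≠ 0) : ∃ j, w (powIdx e j) ≠ 0 := by
  obtain ⟨i, hi⟩ := Function.ne_iff.mp hw
  by_contra! h0
  have hrel : phi K n d e (X i ^ d) = phi K n d e (∏ j, X (powIdx e j) ^ (e i).1 j) := by
    simp only [map_pow, map_prod, phi_X_powIdx]
    rw [phi_X, monomial_one_eq_prod, ← Finset.prod_pow]
    exact Finset.prod_congr rfl fun j _ => by rw [← pow_mul, ← pow_mul, mul_comm]
  have := eval_eq_of_phi_eq K H hrel
  simp only [map_pow, map_prod, eval_X, h0, Finset.prod_pow_eq_pow_sum,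
    ← Finsupp.degree_eq_sum, (e i).2, zero_pow hd.ne'] at this
  exact hi (eq_zero_of_pow_eq_zero this)

lemma prod_eval_mixedIdx (H : ∀ p ∈ RingHom.ker (phi K n d e), eval w p = 0) (hd : 0 < d)
    (k : Fin (n + 1)) (i : ι) :
    ∏ j, w (mixedIdx e hd k j) ^ (e i).1 j = w (powIdx e k) ^ (d - 1) * w i := by
  have hrel : phi K n d e (∏ j, X (mixedIdx e hd k j) ^ (e i).1 j) =
      phi K n d e (X (powIdx e k) ^ (d - 1) * X i) := by
    simp only [map_pow, map_prod, map_mul, phi_X_mixedIdx, phi_X_powIdx]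
    rw [phi_X, monomial_one_eq_prod]
    simp only [mul_pow, Finset.prod_mul_distrib, ← pow_mul, Finset.prod_pow_eq_pow_sum,
      ← Finset.mul_sum, ← Finsupp.degree_eq_sum, (e i).2, mul_comm]
  simpa using eval_eq_of_phi_eq K H hrel

lemma exists_vCoords_eq [IsAlgClosed K] (H : ∀ p ∈ RingHom.ker (phi K n d e), eval w p = 0)
    (hd : 0 < d) (hw : w ≠ 0) :
    ∃ v, vCoords K n d e v = w := by
  obtain ⟨k, hk⟩ := exists_eval_powIdx_ne_zero K H hd hw
  obtain ⟨r, hr⟩ := IsAlgClosed.exists_pow_nat_eq (w (powIdx e k)) hd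
  refine ⟨fun j => w (mixedIdx e hd k j) / r ^ (d - 1), funext fun i => ?_⟩
  calc vCoords K n d e _ i
      = (∏ j, w (mixedIdx e hd k j) ^ (e i).1 j) / (r ^ d) ^ (d - 1) := by
        simp only [vCoords_apply, div_pow, Finset.prod_div_distrib, ← pow_mul,
          Finset.prod_pow_eq_pow_sum, ← Finset.mul_sum, ← Finsupp.degree_eq_sum, (e i).2, mul_comm]
    _ = w i := by
        rw [prod_eval_mixedIdx K H, hr]
        field_simp

end VeroneseRelations

section Closedness

variable [IsAlgClosed K] {n d : ℕ} {ι : Type} [Nonempty ι]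
  (e : ι ≃ {m : Fin (n + 1) →₀ ℕ // m.degree = d})

lemma isClosedSubvariety_image_veroneseMap (hd : 0 < d)
    {W : Set (Projectivization K (Fin (n + 1) → K))} (hW : IsClosedSubvariety K W) :
    IsClosedSubvariety K (veroneseMap K n d e '' W) := by
  refine (isClosedSubvariety_iff K).mpr fun x hx => ?_
  induction x using Projectivization.ind with | h w hw => ?_
  have hvan : ∀ q ∈ pvi K (veroneseMap K n d e '' W), eval w q = 0 :=
    fun q hq => (mem_pzl K).mp hx q hq w hw rfl
  have hker : RingHom.ker (phi K n d e) ≤ pvi K (veroneseMap K n d e '' W) := by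
    rw [pvi_image_veroneseMap K e hd, RingHom.ker_eq_comap_bot]
    exact Ideal.comap_mono bot_le
  obtain ⟨v, rfl⟩ := exists_vCoords_eq K (fun p hp => hvan p (hker hp)) hd hw
  have hv : v ≠ 0 := by rintro rfl; exact hw (vCoords_zero K e hd)
  refine (mk_mem_image_veroneseMap_iff K e hd hw).mpr ⟨v, hv, ?_, rfl⟩
  rw [hW]
  refine mk_mem_pzl_pvi_of_isHomogeneous K hv fun g hg s hgs => ?_
  -- `g ^ d` lies in the Veronese subring, so it vanishes at `v` by the hypothesis on `ν(v)`.
  have hgd : g ^ d ∈ homogeneousSubmodule (Fin (n + 1)) K (d * s) := by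
    simpa [mul_comm] using hgs.pow d
  rw [← map_phi_homogeneousSubmodule K e s] at hgd
  obtain ⟨q, -, hq : phi K n d e q = g ^ d⟩ := hgd
  have hqW : q ∈ pvi K (veroneseMap K n d e '' W) := by
    rw [pvi_image_veroneseMap K e hd, Ideal.mem_comap]
    exact hq ▸ Ideal.pow_mem_of_mem _ hg d hd
  have := hvan q hqW
  rw [← eval_phi, hq, map_pow] at this
  exact eq_zero_of_pow_eq_zero this

lemma isClosedSubvariety_preimage_veroneseMap (hd : 0 < d)
    {X : Set (Projectivization K (ι → K))} (hX : IsClosedSubvariety K X)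
    (hXV : X ⊆ veroneseVariety K n d e) :
    IsClosedSubvariety K (veroneseMap K n d e ⁻¹' X) := by
  refine (isClosedSubvariety_iff K).mpr fun x hx => ?_
  induction x using Projectivization.ind with | h v hv => ?_
  show veroneseMap K n d e _ ∈ X
  rw [hX, mem_pzl]
  intro f hf w hw hwv
  obtain ⟨u, hu, huv, rfl⟩ := exists_rep_vCoords_eq K e hd hv hw hwv
  rw [← Set.image_preimage_eq_of_subset hXV, pvi_image_veroneseMap K e hd] at hf
  rw [← eval_phi]
  exact (mem_pzl K).mp hx _ hf u hu huv

end Closedness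

theorem statement4_general (n d N : ℕ) (hd : 0 < d)
    (K : Type) [Field K] [IsAlgClosed K]
    (e : Fin (N + 1) ≃ {m : Fin (n + 1) →₀ ℕ // m.degree = d})
    (h : ℕ → ℕ) :
    (∃ X : Set (Projectivization K (Fin (N + 1) → K)), IsClosedSubvariety K X ∧
        X ⊆ veroneseVariety K n d e ∧ ∀ t, hilb K X t = h t) ↔
      ∃ k : ℕ → ℕ, (∃ W : Set (Projectivization K (Fin (n + 1) → K)),
        IsClosedSubvariety K W ∧ ∀ t, hilb K W t = k t) ∧ ∀ t, h t = k (d * t) := by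
  constructor
  · rintro ⟨X, hX, hXV, hXh⟩
    refine ⟨hilb K (veroneseMap K n d e ⁻¹' X),
      ⟨_, isClosedSubvariety_preimage_veroneseMap K e hd hX hXV, fun _ => rfl⟩, fun t => ?_⟩
    rw [← hXh, ← hilb_image_veroneseMap K e hd, Set.image_preimage_eq_of_subset hXV]
  · rintro ⟨k, ⟨W, hW, hWk⟩, hhk⟩
    exact ⟨veroneseMap K n d e '' W, isClosedSubvariety_image_veroneseMap K e hd hW,
      Set.image_subset_range _ _, fun t => by rw [hilb_image_veroneseMap K e hd, hWk, hhk]⟩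

theorem statement4 (n d N : ℕ) (hn : 0 < n) (hd : 0 < d)
    (hN : N = (n + d).choose d - 1)
    (K : Type) [Field K] [IsAlgClosed K] [CharZero K]
    (e : Fin (N + 1) ≃ {m : Fin (n + 1) →₀ ℕ // m.degree = d})
    (h : ℕ → ℕ)
    (hh : ∃ Z : Set (Projectivization K (Fin (N + 1) → K)),
      IsClosedSubvariety K Z ∧ ∀ t, hilb K Z t = h t) :
    (∃ X : Set (Projectivization K (Fin (N + 1) → K)), IsClosedSubvariety K X ∧
        X ⊆ veroneseVariety K n d e ∧ ∀ t, hilb K X t = h t) ↔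
      ∃ k : ℕ → ℕ, (∃ W : Set (Projectivization K (Fin (n + 1) → K)),
        IsClosedSubvariety K W ∧ ∀ t, hilb K W t = k t) ∧ ∀ t, h t = k (d * t) :=
  statement4_general n d N hd K e h

end VeroneseCI
end
end

section
/- Let d, t ∈ ℕ with d ≥ 1, and let h: {1,2,…,d} → ℕ be a function for which there exists i_0 ∈ {1,2,…,d} such that h(i) = dt + i + 1 for all 1 ≤ i ≤ i_0 − 1, and h(i) ≥ h(i+1) for all i_0 ≤ i ≤ d − 1. Then h(d) ≤ μ2(d, t, Σ_{i=1}^d h(i)). Moreover the inequality is sharp: for each admissible value s of the sum there is such a function with Σ_{i=1}^d h(i) = s and h(d) = μ2(d,t,s). -/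
/-!
Let `m = μ₁` be the deficit of the sum below its maximum `∑ i ∈ Icc 1 d, (d t + i + 1)`. If the
first `i0 - 1` values are maximal and the remaining `k = d + 1 - i0` values are at least `h d`,
then with `a = d t + d + 1 - h d` the deficit satisfies `2 m ≤ k (2 a - k + 1) = 2 ∑_{l<k} (a - l)`.
The right-hand side is at most `a (a + 1)`, and at most `d (d + 1) + 2 d n` when `k ≤ d` and
`a ≤ d + n`; these are exactly the two regimes in the definition of `μ₂`, the first one through the
least `r` with `2 m ≤ r (r + 1)`. Conversely the bound is attained by a staircase: maximal values up
to `j`, one adjusting value, then a constant, with `j = d - r` in the first regime (`j = d - 1` if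
`m = 0`) and `j = 0` in the second.
-/

open MvPolynomial

noncomputable section

namespace VeroneseCI

variable (K : Type) [Field K]

variable {σ : Type}

theorem antitoneOn_Icc_of_succ_le {α : Type*} [Preorder α] {f : ℕ → α} {a b : ℕ}
    (hf : ∀ i, a ≤ i → i < b → f (i + 1) ≤ f i) : AntitoneOn f (Set.Icc a b) := by
  rintro x ⟨hax, -⟩ y ⟨-, hyb⟩ hxy
  induction y, hxy using Nat.le_induction with
  | base => exact le_rfl
  | succ y hxy ih => exact (hf y (hax.trans hxy) hyb).trans (ih (by omega))

theorem two_mul_sum_Icc_add_succ (c j : ℕ) :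
    2 * ∑ i ∈ Finset.Icc 1 j, (c + i + 1) = j * (2 * c + j + 3) := by
  induction j with
  | zero => simp
  | succ j ih =>
    rw [Finset.sum_Icc_succ_top (by omega), mul_add, ih]
    ring

theorem two_mul_choose_two_succ (d : ℕ) : 2 * (d + 1).choose 2 = d * (d + 1) := by
  have := Nat.add_one_mul_choose_eq d 1
  simp only [Nat.choose_one_right] at this
  linarith

def mu1 (d t s : ℕ) : ℕ := d ^ 2 * t + d * (d + 3) / 2 - s

theorem two_mul_maxSum (d t : ℕ) :
    2 * (d ^ 2 * t + d * (d + 3) / 2) = d * (2 * (d * t) + d + 3) := by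
  have heven : Even (d * (d + 3)) := by
    rw [show d * (d + 3) = d * (d + 1) + 2 * d by ring]
    exact (Nat.even_mul_succ_self d).add (even_two_mul d)
  rw [mul_add, Nat.two_mul_div_two_of_even heven]
  ring

theorem exists_two_mul_le_mul_succ (m : ℕ) : ∃ r, 2 * m ≤ r * (r + 1) :=
  ⟨2 * m, Nat.le_mul_of_pos_right _ (Nat.succ_pos _)⟩

def triangleIndex (m : ℕ) : ℕ := Nat.find (exists_two_mul_le_mul_succ m)

theorem two_mul_le_triangleIndex_mul_succ (m : ℕ) :
    2 * m ≤ triangleIndex m * (triangleIndex m + 1) :=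
  Nat.find_spec (exists_two_mul_le_mul_succ m)

theorem mul_succ_lt_of_lt_triangleIndex {m a : ℕ} (ha : a < triangleIndex m) :
    a * (a + 1) < 2 * m :=
  not_le.mp (Nat.find_min (exists_two_mul_le_mul_succ m) ha)

theorem triangleIndex_le {m d : ℕ} (h : 2 * m ≤ d * (d + 1)) : triangleIndex m ≤ d :=
  Nat.find_min' (exists_two_mul_le_mul_succ m) h

theorem floor_sub_sqrt_div_two_eq (A : ℤ) (m : ℕ) :
    ⌊((2 * A + 3 : ℝ) - √(1 + 8 * m)) / 2⌋ = A + 1 - triangleIndex m := by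
  set r := triangleIndex m
  have hle : (2 * m : ℝ) ≤ r * (r + 1) := by exact_mod_cast two_mul_le_triangleIndex_mul_succ m
  have hsqrt_le : √(1 + 8 * m) ≤ 2 * r + 1 :=
    Real.sqrt_le_iff.mpr ⟨by positivity, by nlinarith⟩
  have hlt_sqrt : 2 * (r : ℝ) - 1 < √(1 + 8 * m) := by
    rcases Nat.eq_zero_or_eq_succ_pred r with hr | hr
    · rw [hr, Nat.cast_zero]
      linarith [Real.sqrt_nonneg (1 + 8 * m : ℝ)]
    · have hlt : ((r - 1 : ℕ) : ℝ) * ((r - 1 : ℕ) + 1) < 2 * m := by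
        exact_mod_cast mul_succ_lt_of_lt_triangleIndex (Nat.pred_lt_self (by omega))
      rw [Nat.cast_pred (by omega)] at hlt
      exact Real.lt_sqrt_of_sq_lt (by nlinarith)
  rw [Int.floor_eq_iff]
  push_cast
  constructor <;> linarith

theorem mu2_eq_ite (d t s : ℕ) :
    mu2 d t s = if mu1 d t s ≤ (d + 1).choose 2 then
      (⌊((2 * d * (t + 1) + 3 : ℝ) - √(1 + 8 * mu1 d t s)) / 2⌋).toNat
    else d * t - (mu1 d t s - (d + 1).choose 2 - 1) / d :=
  rfl

theorem mu2_of_mu1_le {d t s : ℕ} (h : mu1 d t s ≤ (d + 1).choose 2) :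
    mu2 d t s = d * t + d + 1 - triangleIndex (mu1 d t s) := by
  have hr : triangleIndex (mu1 d t s) ≤ d := by
    apply triangleIndex_le
    have := two_mul_choose_two_succ d
    omega
  have hcast : (2 * d * (t + 1) + 3 : ℝ) = 2 * ((d * t + d : ℕ) : ℤ) + 3 := by
    push_cast
    ring
  have hfloor := floor_sub_sqrt_div_two_eq ((d * t + d : ℕ) : ℤ) (mu1 d t s)
  rw [← hcast] at hfloor
  rw [mu2_eq_ite, if_pos h, hfloor]
  omega

theorem mu2_of_lt_mu1 {d t s : ℕ} (h : (d + 1).choose 2 < mu1 d t s) :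
    mu2 d t s = d * t - (mu1 d t s - (d + 1).choose 2 - 1) / d := by
  rw [mu2_eq_ite, if_neg h.not_ge]

theorem le_and_le_mul_div_add {c x d : ℕ} (hd : 0 < d) (hcx : c < x) :
    d * ((x - c - 1) / d) + c + 1 ≤ x ∧ x ≤ d * ((x - c - 1) / d) + c + d := by
  have := Nat.div_add_mod (x - c - 1) d
  have := Nat.mod_lt (x - c - 1) hd
  omega

def IsAdmissible (d t i0 : ℕ) (h : ℕ → ℕ) : Prop :=
  1 ≤ i0 ∧ i0 ≤ d ∧ (∀ i, 1 ≤ i → i ≤ i0 - 1 → h i = d * t + i + 1) ∧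
    ∀ i, i0 ≤ i → i ≤ d - 1 → h (i + 1) ≤ h i

theorem sum_Icc_add_mul_le_sum {d t i0 : ℕ} {h : ℕ → ℕ} (hh : IsAdmissible d t i0 h) :
    ∑ i ∈ Finset.Icc 1 (i0 - 1), (d * t + i + 1) + (d + 1 - i0) * h d ≤
      ∑ i ∈ Finset.Icc 1 d, h i := by
  obtain ⟨hi0, hi0d, hprefix, htail⟩ := hh
  have hanti : AntitoneOn h (Set.Icc i0 d) :=
    antitoneOn_Icc_of_succ_le fun i hi hid => htail i hi (by omega)
  have hIcc (n : ℕ) : Finset.Icc 1 n = Finset.Ioc 0 n := Finset.Icc_add_one_left_eq_Ioc 0 n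
  rw [hIcc, hIcc, ← Finset.sum_Ioc_consecutive _ (Nat.zero_le (i0 - 1)) (by omega : i0 - 1 ≤ d)]
  gcongr with i hi
  · rw [Finset.mem_Ioc] at hi
    exact (hprefix i (by omega) hi.2).ge
  · have hcard : (Finset.Ioc (i0 - 1) d).card = d + 1 - i0 := by
      rw [Nat.card_Ioc]
      omega
    rw [← hcard, ← smul_eq_mul]
    refine Finset.card_nsmul_le_sum _ _ _ fun i hi => ?_
    rw [Finset.mem_Ioc] at hi
    exact hanti ⟨by omega, hi.2⟩ ⟨hi0d, le_rfl⟩ hi.2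

theorem exists_two_mul_mu1_le {d t i0 : ℕ} {h : ℕ → ℕ} (hh : IsAdmissible d t i0 h)
    (hs : ∑ i ∈ Finset.Icc 1 d, h i ≤ d ^ 2 * t + d * (d + 3) / 2) :
    ∃ k : ℕ, 1 ≤ k ∧ k ≤ d ∧
      2 * (mu1 d t (∑ i ∈ Finset.Icc 1 d, h i) : ℤ) ≤
        k * (2 * ((d * t + d + 1 : ℤ) - h d) - k + 1) := by
  have hsum := sum_Icc_add_mul_le_sum hh
  have hprefix := two_mul_sum_Icc_add_succ (d * t) (i0 - 1)
  have hmax := two_mul_maxSum d t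
  obtain ⟨hi0, hi0d, -, -⟩ := hh
  refine ⟨d + 1 - i0, by omega, by omega, ?_⟩
  obtain ⟨j, rfl⟩ : ∃ j, i0 = j + 1 := ⟨i0 - 1, by omega⟩
  obtain ⟨k, rfl⟩ : ∃ k, d = j + k := ⟨d - j, by omega⟩
  simp only [Nat.add_sub_cancel] at hsum hprefix ⊢
  rw [show j + k + 1 - (j + 1) = k by omega] at hsum ⊢
  unfold mu1
  rw [Nat.cast_sub hs]
  push_cast at hsum hprefix hmax ⊢
  linarith

theorem mul_two_mul_sub_add_one_le (a k : ℤ) : k * (2 * a - k + 1) ≤ a * (a + 1) := by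
  have : 0 ≤ (a - k) * (a - k + 1) := by
    rcases le_or_gt 0 (a - k) with h | h <;> nlinarith
  nlinarith

theorem mul_two_mul_sub_add_one_lt_of_lt_triangleIndex {m : ℕ} {a : ℤ} {k : ℕ} (hk : 1 ≤ k)
    (ha : a < triangleIndex m) : k * (2 * a - k + 1) < 2 * (m : ℤ) := by
  rcases lt_or_ge a 0 with ha0 | ha0
  · have : (1 : ℤ) ≤ k := by exact_mod_cast hk
    nlinarith
  · lift a to ℕ using ha0
    have hlt : (a * (a + 1) : ℤ) < 2 * m := by
      exact_mod_cast mul_succ_lt_of_lt_triangleIndex (by exact_mod_cast ha)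
    linarith [mul_two_mul_sub_add_one_le a k]

theorem mul_two_mul_sub_add_one_le_of_le {d n k : ℕ} {a : ℤ} (hkd : k ≤ d) (ha : a ≤ d + n) :
    k * (2 * a - k + 1) ≤ (d * (d + 1) + 2 * d * n : ℤ) := by
  have hkd' : (k : ℤ) ≤ d := by exact_mod_cast hkd
  have hk : (0 : ℤ) ≤ k := by positivity
  have hn : (0 : ℤ) ≤ n := by positivity
  nlinarith [mul_nonneg (sub_nonneg.mpr hkd') (by linarith : (0 : ℤ) ≤ d + 1 + 2 * n - k)]

theorem le_mu2_of_isAdmissible {d t i0 : ℕ} {h : ℕ → ℕ} (hh : IsAdmissible d t i0 h)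
    (hs : ∑ i ∈ Finset.Icc 1 d, h i ≤ d ^ 2 * t + d * (d + 3) / 2) :
    h d ≤ mu2 d t (∑ i ∈ Finset.Icc 1 d, h i) := by
  obtain ⟨k, hk, hkd, hdeficit⟩ := exists_two_mul_mu1_le hh hs
  by_cases hm : mu1 d t (∑ i ∈ Finset.Icc 1 d, h i) ≤ (d + 1).choose 2
  · rw [mu2_of_mu1_le hm]
    generalize mu1 d t (∑ i ∈ Finset.Icc 1 d, h i) = m at hdeficit
    by_contra! hlt
    have ha : (d * t + d + 1 : ℤ) - h d < triangleIndex m := by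
      have : d * t + d + 1 < h d + triangleIndex m := by omega
      zify at this
      linarith
    linarith [mul_two_mul_sub_add_one_lt_of_lt_triangleIndex hk ha]
  · replace hm := not_le.mp hm
    rw [mu2_of_lt_mu1 hm]
    generalize mu1 d t (∑ i ∈ Finset.Icc 1 d, h i) = m at hm hdeficit
    obtain ⟨hmn, -⟩ := le_and_le_mul_div_add (by omega : 0 < d) hm
    generalize (m - (d + 1).choose 2 - 1) / d = n at hmn ⊢
    by_contra! hlt
    have ha : (d * t + d + 1 : ℤ) - h d ≤ d + n := by
      have : d * t + 1 ≤ h d + n := by omega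
      zify at this
      linarith
    have hC := two_mul_choose_two_succ d
    zify at hmn hC
    linarith [mul_two_mul_sub_add_one_le_of_le hkd ha]

def stair (d t j x g : ℕ) (i : ℕ) : ℕ :=
  if i ≤ j then d * t + i + 1 else if i = j + 1 then x else g

theorem isAdmissible_stair {d t j x g : ℕ} (hj : j < d) (hgx : g ≤ x) :
    IsAdmissible d t (j + 1) (stair d t j x g) := by
  refine ⟨by omega, hj, fun i _ hi => if_pos (by omega), fun i hi _ => ?_⟩
  unfold stair
  split_ifs <;> omega

theorem sum_stair {d t j x g n : ℕ} (hjn : j < n) :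
    ∑ i ∈ Finset.Icc 1 n, stair d t j x g i =
      ∑ i ∈ Finset.Icc 1 j, (d * t + i + 1) + x + (n - j - 1) * g := by
  induction n, hjn using Nat.le_induction with
  | base =>
    rw [Finset.sum_Icc_succ_top (by omega), show j.succ - j - 1 = 0 by omega, zero_mul, add_zero]
    congr 1
    · exact Finset.sum_congr rfl fun i hi => if_pos (Finset.mem_Icc.mp hi).2
    · simp [stair]
  | succ n hjn ih =>
    rw [Finset.sum_Icc_succ_top (by omega), ih, stair, if_neg (by omega), if_neg (by omega),
      show n + 1 - j - 1 = (n - j - 1) + 1 by omega]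
    ring

theorem exists_isAdmissible_of_le {d t j g s : ℕ} (hj : j < d)
    (hle : ∑ i ∈ Finset.Icc 1 j, (d * t + i + 1) + (d - j) * g ≤ s)
    (hlast : j + 1 = d → s = ∑ i ∈ Finset.Icc 1 j, (d * t + i + 1) + g) :
    ∃ h : ℕ → ℕ, (∃ i0, IsAdmissible d t i0 h) ∧ ∑ i ∈ Finset.Icc 1 d, h i = s ∧ h d = g := by
  set P := ∑ i ∈ Finset.Icc 1 j, (d * t + i + 1)
  have hdj : (d - j) * g = g + (d - j - 1) * g := by
    rw [← one_add_mul]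
    congr 1
    omega
  refine ⟨stair d t j (s - P - (d - j - 1) * g) g,
    ⟨j + 1, isAdmissible_stair hj (by omega)⟩, by rw [sum_stair hj]; omega, ?_⟩
  unfold stair
  rcases (Nat.succ_le_of_lt hj).eq_or_lt with hjd | hjd
  · rw [if_neg (by omega), if_pos hjd.symm, hlast hjd, ← hjd]
    simp
  · rw [if_neg (by omega), if_neg (by omega)]

theorem exists_isAdmissible_eq_sub_triangleIndex {d t s m : ℕ} (hd : 1 ≤ d)
    (h2s : 2 * s + 2 * m = d * (2 * (d * t) + d + 3)) (hm : 2 * m ≤ d * (d + 1)) :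
    ∃ h : ℕ → ℕ, (∃ i0, IsAdmissible d t i0 h) ∧ ∑ i ∈ Finset.Icc 1 d, h i = s ∧
      h d = d * t + d + 1 - triangleIndex m := by
  have hrd := triangleIndex_le hm
  have hrm := two_mul_le_triangleIndex_mul_succ m
  have hm0 : m = 0 → triangleIndex m = 0 := fun h0 =>
    Nat.le_zero.mp (triangleIndex_le (by simp [h0]))
  generalize triangleIndex m = r at hrd hrm hm0
  rcases Nat.eq_zero_or_pos r with rfl | hr
  · obtain rfl : m = 0 := by simpa using hrm
    obtain ⟨j, rfl⟩ : ∃ j, d = j + 1 := ⟨d - 1, by omega⟩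
    have hprefix := two_mul_sum_Icc_add_succ ((j + 1) * t) j
    rw [Nat.sub_zero]
    refine exists_isAdmissible_of_le (j := j) (by omega) ?_ fun _ => ?_
    · rw [Nat.add_sub_cancel_left, one_mul]
      linarith
    · linarith
  · obtain ⟨j, rfl⟩ : ∃ j, d = j + r := ⟨d - r, by omega⟩
    have hprefix := two_mul_sum_Icc_add_succ ((j + r) * t) j
    rw [show (j + r) * t + (j + r) + 1 - r = (j + r) * t + j + 1 by omega]
    refine exists_isAdmissible_of_le (j := j) (by omega) ?_ fun hjr => ?_
    · rw [Nat.add_sub_cancel_left]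
      nlinarith
    · obtain rfl : r = 1 := by omega
      obtain rfl : m = 1 := by omega
      linarith

theorem exists_isAdmissible_eq_mul_sub {d t s m n : ℕ} (hd : 1 ≤ d)
    (h2s : 2 * s + 2 * m = d * (2 * (d * t) + d + 3))
    (hlo : d * n + (d + 1).choose 2 + 1 ≤ m) (hhi : m ≤ d * n + (d + 1).choose 2 + d) :
    ∃ h : ℕ → ℕ, (∃ i0, IsAdmissible d t i0 h) ∧ ∑ i ∈ Finset.Icc 1 d, h i = s ∧
      h d = d * t - n := by
  have hC := two_mul_choose_two_succ d
  have hexpand : d * (2 * (d * t) + d + 3) = 2 * (d * (d * t)) + d * (d + 1) + 2 * d := by ring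
  refine exists_isAdmissible_of_le (j := 0) (by omega) ?_ fun hd1 => ?_
  · rw [Finset.Icc_eq_empty (by omega), Finset.sum_empty, zero_add, Nat.sub_zero, Nat.mul_sub]
    omega
  · subst hd1
    rw [Finset.Icc_eq_empty (by omega), Finset.sum_empty, zero_add]
    omega

theorem exists_isAdmissible_eq_mu2 {d t s : ℕ} (hd : 1 ≤ d)
    (hs : s ≤ d ^ 2 * t + d * (d + 3) / 2) :
    ∃ h : ℕ → ℕ, (∃ i0, IsAdmissible d t i0 h) ∧ ∑ i ∈ Finset.Icc 1 d, h i = s ∧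
      h d = mu2 d t s := by
  have h2s : 2 * s + 2 * mu1 d t s = d * (2 * (d * t) + d + 3) := by
    have := two_mul_maxSum d t
    unfold mu1
    omega
  by_cases hm : mu1 d t s ≤ (d + 1).choose 2
  · rw [mu2_of_mu1_le hm]
    have := two_mul_choose_two_succ d
    exact exists_isAdmissible_eq_sub_triangleIndex hd h2s (by omega)
  · replace hm := not_le.mp hm
    obtain ⟨hlo, hhi⟩ := le_and_le_mul_div_add hd hm
    rw [mu2_of_lt_mu1 hm]
    exact exists_isAdmissible_eq_mul_sub hd h2s (by omega) (by omega)

theorem statement8 (d t : ℕ) (hd : 1 ≤ d) :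
    (∀ h : ℕ → ℕ,
      (∃ i0 : ℕ, 1 ≤ i0 ∧ i0 ≤ d ∧ (∀ i, 1 ≤ i → i ≤ i0 - 1 → h i = d * t + i + 1) ∧
        ∀ i, i0 ≤ i → i ≤ d - 1 → h (i + 1) ≤ h i) →
      (∑ i ∈ Finset.Icc 1 d, h i) ≤ d ^ 2 * t + d * (d + 3) / 2 →
      h d ≤ mu2 d t (∑ i ∈ Finset.Icc 1 d, h i)) ∧
    ∀ s : ℕ, s ≤ d ^ 2 * t + d * (d + 3) / 2 →
      ∃ h : ℕ → ℕ,
        (∃ i0 : ℕ, 1 ≤ i0 ∧ i0 ≤ d ∧ (∀ i, 1 ≤ i → i ≤ i0 - 1 → h i = d * t + i + 1) ∧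
          ∀ i, i0 ≤ i → i ≤ d - 1 → h (i + 1) ≤ h i) ∧
        (∑ i ∈ Finset.Icc 1 d, h i) = s ∧ h d = mu2 d t s :=
  ⟨fun _ ⟨_, hh⟩ hs => le_mu2_of_isAdmissible hh hs,
    fun _ hs => exists_isAdmissible_eq_mu2 hd hs⟩

end VeroneseCI
end
end
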